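/- Let c ∈ (0,1) and let P be the rotation by π/3 about the axis through the origin and v₁ = (1,-1,1), with c = 1/2. Then the pieces satisfy A₁ ∩ A_i = ∅ for all i ∈ {2,3,4}, while A_i ∩ A_j ≠ ∅ for all i, j ∈ {2,3,4}. In particular, the attractor A(1/2, P) is disconnected even though three of its four pieces pairwise intersect. -/

import Mathlib

/- STATEMENT 9: Let c = 1/2 and let P be the rotation by π/3 about the axis through the
origin and v₁ = (1,-1,1) (given below as an explicit matrix, computed via Rodrigues'
formula). Then A₁ ∩ A_i = ∅ for all i ∈ {2,3,4}, while A_i ∩ A_j ≠ ∅ for all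
i, j ∈ {2,3,4}; in particular the attractor A(1/2,P) is disconnected even though three of
its four pieces pairwise intersect. (Indices are 0-based: piece 0 is A₁, etc.) -/

noncomputable section
open Matrix

abbrev E3 := EuclideanSpace ℝ (Fin 3)

def vtx : Fin 4 → E3 :=
  ![!₂[1, -1, 1], !₂[-1, 1, 1], !₂[-1, -1, -1], !₂[1, 1, -1]]

def fmap (c : ℝ) (P : Matrix (Fin 3) (Fin 3) ℝ) (i : Fin 4) (x : E3) : E3 :=
  c • Matrix.toEuclideanLin P x + vtx i

def IsAttractor (c : ℝ) (P : Matrix (Fin 3) (Fin 3) ℝ) (A : Set E3) : Prop :=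
  A.Nonempty ∧ IsCompact A ∧ A = ⋃ i : Fin 4, fmap c P i '' A

/-- The rotation by π/3 about the line through 0 and (1,-1,1). -/
def Prot : Matrix (Fin 3) (Fin 3) ℝ :=
  !![2/3, -2/3, -1/3; 1/3, 2/3, -2/3; 2/3, 1/3, 2/3]

/-!
Write `φ i = fmap (1 / 2) Prot i`. Each `φ i` is a similarity of ratio `1 / 2` and `‖vtx i‖ ≤ 2`,
so `A` lies in the ball of radius `4` about the origin and every point of `A` is within `1` of one
of the sixteen points `φ a (φ b 0)`. Piece `i` is therefore within `1 / 2` of the points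
`φ i (φ a (φ b 0))`. As `3 • Prot` is an integer matrix, `36` times these points have integer
coordinates, and an exact integer computation shows that those of piece `0` are at distance more
than `1` from those of every other piece. So piece `0` is disjoint from the others; both it and
the union of the others are compact, which disconnects `A`.

For the intersections: `φ i` maps `A` into `A`, so it halves the distance to `A`, and a fixed
point of a composition of the `φ i` lies in `A`. The periodic point `p` with address
`(2 1 1 3 3 2)^∞` yields common points of pieces `1`, `2`, `3`, e.g.
`φ 1 p = φ 2 (φ 3 (φ 3 (φ 2 p)))`.
-/

open Set Metric

section Attractor

variable {c : ℝ} {P : Matrix (Fin 3) (Fin 3) ℝ} {A : Set E3}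

theorem continuous_fmap (i : Fin 4) : Continuous (fmap c P i) := by
  unfold fmap
  fun_prop

theorem dist_fmap_fmap (hP : ∀ x, ‖toEuclideanLin P x‖ = ‖x‖) (i : Fin 4) (x y : E3) :
    dist (fmap c P i x) (fmap c P i y) = |c| * dist x y := by
  rw [dist_eq_norm, dist_eq_norm]
  simp only [fmap, add_sub_add_right_eq_sub, ← smul_sub, ← map_sub, norm_smul, hP,
    Real.norm_eq_abs]

theorem norm_vtx_le_two (i : Fin 4) : ‖vtx i‖ ≤ 2 := by
  rw [EuclideanSpace.norm_eq, Real.sqrt_le_left (by norm_num)]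
  fin_cases i <;> simp [vtx, Fin.sum_univ_three] <;> norm_num

theorem IsAttractor.fmap_mem (hA : IsAttractor c P A) (i : Fin 4) {x : E3} (hx : x ∈ A) :
    fmap c P i x ∈ A := by
  rw [hA.2.2]
  exact mem_iUnion.2 ⟨i, mem_image_of_mem _ hx⟩

theorem IsAttractor.exists_fmap_eq (hA : IsAttractor c P A) {x : E3} (hx : x ∈ A) :
    ∃ i, ∃ y ∈ A, fmap c P i y = x := by
  rw [hA.2.2] at hx
  simpa only [mem_iUnion, mem_image] using hx

theorem IsAttractor.norm_le (hP : ∀ x, ‖toEuclideanLin P x‖ = ‖x‖) (hc : |c| < 1)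
    (hA : IsAttractor c P A) {x : E3} (hx : x ∈ A) : ‖x‖ ≤ 2 / (1 - |c|) := by
  obtain ⟨x₀, hx₀, hmax⟩ := hA.2.1.exists_isMaxOn hA.1 continuous_norm.continuousOn
  obtain ⟨i, y, hy, rfl⟩ := hA.exists_fmap_eq hx₀
  have hfy : ‖fmap c P i y‖ ≤ |c| * ‖y‖ + 2 :=
    calc ‖fmap c P i y‖ ≤ ‖c • toEuclideanLin P y‖ + ‖vtx i‖ := norm_add_le _ _
      _ ≤ |c| * ‖y‖ + 2 := by
        rw [norm_smul, hP, Real.norm_eq_abs]; linarith [norm_vtx_le_two i]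
  have hy_le : ‖y‖ ≤ ‖fmap c P i y‖ := hmax hy
  have hmax_le : ‖fmap c P i y‖ * (1 - |c|) ≤ 2 := by
    nlinarith [abs_nonneg c]
  rw [le_div_iff₀ (by linarith)]
  calc ‖x‖ * (1 - |c|) ≤ ‖fmap c P i y‖ * (1 - |c|) :=
      mul_le_mul_of_nonneg_right (hmax hx) (by linarith)
    _ ≤ 2 := hmax_le

theorem IsAttractor.exists_dist_fmap_fmap_zero_le (hP : ∀ x, ‖toEuclideanLin P x‖ = ‖x‖)
    (hc : |c| < 1) (hA : IsAttractor c P A) {x : E3} (hx : x ∈ A) :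
    ∃ a b, dist x (fmap c P a (fmap c P b 0)) ≤ |c| ^ 2 * (2 / (1 - |c|)) := by
  obtain ⟨a, y, hy, rfl⟩ := hA.exists_fmap_eq hx
  obtain ⟨b, z, hz, rfl⟩ := hA.exists_fmap_eq hy
  refine ⟨a, b, ?_⟩
  rw [dist_fmap_fmap hP, dist_fmap_fmap hP, ← mul_assoc, ← sq, dist_zero_right]
  gcongr
  exact hA.norm_le hP hc hz

theorem IsAttractor.infDist_fmap_le (hP : ∀ x, ‖toEuclideanLin P x‖ = ‖x‖)
    (hA : IsAttractor c P A) (i : Fin 4) (x : E3) :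
    infDist (fmap c P i x) A ≤ |c| * infDist x A := by
  obtain ⟨y, hy, hxy⟩ := hA.2.1.exists_infDist_eq_dist hA.1 x
  rw [hxy, ← dist_fmap_fmap hP]
  exact infDist_le_dist_of_mem (hA.fmap_mem i hy)

def fmapWord (c : ℝ) (P : Matrix (Fin 3) (Fin 3) ℝ) : List (Fin 4) → E3 → E3
  | [] => id
  | i :: w => fmap c P i ∘ fmapWord c P w

theorem IsAttractor.infDist_fmapWord_le (hP : ∀ x, ‖toEuclideanLin P x‖ = ‖x‖)
    (hA : IsAttractor c P A) (w : List (Fin 4)) (x : E3) :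
    infDist (fmapWord c P w x) A ≤ |c| ^ w.length * infDist x A := by
  induction w with
  | nil => simp [fmapWord]
  | cons i w ih =>
    calc infDist (fmap c P i (fmapWord c P w x)) A
        ≤ |c| * infDist (fmapWord c P w x) A := hA.infDist_fmap_le hP i _
      _ ≤ |c| * (|c| ^ w.length * infDist x A) := by gcongr
      _ = |c| ^ (i :: w).length * infDist x A := by
        rw [List.length_cons, pow_succ]; ring

theorem IsAttractor.mem_of_fmapWord_eq (hP : ∀ x, ‖toEuclideanLin P x‖ = ‖x‖) (hc : |c| < 1)
    (hA : IsAttractor c P A) {w : List (Fin 4)} (hw : w ≠ []) {x : E3}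
    (hx : fmapWord c P w x = x) : x ∈ A := by
  have hle := hA.infDist_fmapWord_le hP w x
  rw [hx] at hle
  have hlt : |c| ^ w.length < 1 :=
    pow_lt_one₀ (abs_nonneg c) hc (List.length_pos_iff.2 hw).ne'
  rw [hA.2.1.isClosed.mem_iff_infDist_zero hA.1]
  nlinarith [infDist_nonneg (x := x) (s := A), pow_nonneg (abs_nonneg c) w.length]

theorem IsAttractor.not_isPreconnected (hA : IsAttractor c P A) (i₀ : Fin 4)
    (hdisj : ∀ i ≠ i₀, Disjoint (fmap c P i₀ '' A) (fmap c P i '' A)) : ¬ IsPreconnected A := by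
  have hclosed : ∀ i, IsClosed (fmap c P i '' A) :=
    fun i => (hA.2.1.image (continuous_fmap i)).isClosed
  obtain ⟨j, hj⟩ := exists_ne i₀
  obtain ⟨a, ha⟩ := hA.1
  intro hconn
  have hcover : A ⊆ fmap c P i₀ '' A ∪ ⋃ (i) (_ : i ≠ i₀), fmap c P i '' A := by
    intro x hx
    obtain ⟨i, y, hy, rfl⟩ := hA.exists_fmap_eq hx
    by_cases hi : i = i₀
    · exact Or.inl (hi ▸ mem_image_of_mem _ hy)
    · exact Or.inr (mem_biUnion hi (mem_image_of_mem _ hy))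
  rcases (isPreconnected_iff_subset_of_fully_disjoint_closed hA.2.1.isClosed).1 hconn _ _
    (hclosed i₀) (isClosed_iUnion_of_finite fun i => isClosed_iUnion_of_finite fun _ => hclosed i)
    hcover (disjoint_iUnion₂_right.2 hdisj) with hsub | hsub
  · exact (hdisj j hj).notMem_of_mem_right (mem_image_of_mem _ ha) (hsub (hA.fmap_mem j ha))
  · obtain ⟨i, hi, hmem⟩ := mem_iUnion₂.1 (hsub (hA.fmap_mem i₀ ha))
    exact (hdisj i hi).notMem_of_mem_left (mem_image_of_mem _ ha) hmem

end Attractor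

theorem norm_toEuclideanLin_Prot (x : E3) : ‖toEuclideanLin Prot x‖ = ‖x‖ := by
  simp only [EuclideanSpace.norm_eq, Real.norm_eq_abs, sq_abs]
  congr 1
  simp only [ofLp_toLpLin, toLin'_apply, mulVec, dotProduct, Fin.sum_univ_three, Prot, of_apply,
    cons_val', cons_val_fin_one, cons_val_zero, cons_val_one, cons_val]
  ring

local notation "φ" => fmap (1 / 2) Prot

theorem fmap_half_Prot_apply (i : Fin 4) (x : E3) :
    φ i x = !₂[(2 * x 0 - 2 * x 1 - x 2) / 6 + vtx i 0,
      (x 0 + 2 * x 1 - 2 * x 2) / 6 + vtx i 1, (2 * x 0 + x 1 + 2 * x 2) / 6 + vtx i 2] := by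
  ext k
  fin_cases k <;>
  · simp only [fmap, Prot, PiLp.add_apply, PiLp.smul_apply, ofLp_toLpLin, toLin'_apply, mulVec,
      dotProduct, of_apply, cons_val', cons_val_fin_one, cons_val_zero, cons_val_one, cons_val,
      Fin.sum_univ_three, smul_eq_mul, Fin.zero_eta, Fin.mk_one, Fin.reduceFinMk, Fin.isValue]
    ring

def vtxZ : Fin 4 → Fin 3 → ℤ := ![![1, -1, 1], ![-1, 1, 1], ![-1, -1, -1], ![1, 1, -1]]

def ProtZ : Matrix (Fin 3) (Fin 3) ℤ := !![2, -2, -1; 1, 2, -2; 2, 1, 2]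

theorem intCast_vtxZ (i : Fin 4) (k : Fin 3) : (vtxZ i k : ℝ) = vtx i k := by
  fin_cases i <;> fin_cases k <;> simp [vtxZ, vtx]

theorem intCast_ProtZ (k l : Fin 3) : (ProtZ k l : ℝ) = 3 * Prot k l := by
  fin_cases k <;> fin_cases l <;> norm_num [ProtZ, Prot]

def cellZ (i a b : Fin 4) : Fin 3 → ℤ :=
  36 • vtxZ i + 6 • ProtZ *ᵥ vtxZ a + (ProtZ * ProtZ) *ᵥ vtxZ b

theorem fmap_fmap_fmap_zero (i a b : Fin 4) :
    φ i (φ a (φ b 0)) = (36 : ℝ)⁻¹ • WithLp.toLp 2 (fun k => (cellZ i a b k : ℝ)) := by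
  ext k
  simp only [fmap, one_div, map_zero, smul_zero, zero_add, map_add, map_smul, smul_add,
    PiLp.add_apply, PiLp.smul_apply, ofLp_toLpLin, toLin'_apply, mulVec, dotProduct,
    Fin.sum_univ_three, smul_eq_mul, cellZ, nsmul_eq_mul, Nat.cast_ofNat, Pi.add_apply,
    Pi.mul_apply, Pi.ofNat_apply, mul_apply, Int.cast_add, Int.cast_mul, Int.cast_ofNat,
    intCast_vtxZ, intCast_ProtZ]
  ring

theorem cellZ_separated : ∀ i a b a' b' : Fin 4, i ≠ 0 →
    36 ^ 2 < (cellZ 0 a b - cellZ i a' b') ⬝ᵥ (cellZ 0 a b - cellZ i a' b') := by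
  decide

theorem dist_toLp_intCast {n : ℕ} (u v : Fin n → ℤ) :
    dist (WithLp.toLp 2 (fun k => (u k : ℝ)) : EuclideanSpace ℝ (Fin n))
      (WithLp.toLp 2 (fun k => (v k : ℝ))) = √(((u - v) ⬝ᵥ (u - v) : ℤ) : ℝ) := by
  simp [EuclideanSpace.dist_eq, dotProduct, Real.dist_eq, sq]

theorem one_lt_dist_fmap_fmap_fmap_zero {i : Fin 4} (hi : i ≠ 0) (a b a' b' : Fin 4) :
    1 < dist (φ 0 (φ a (φ b 0))) (φ i (φ a' (φ b' 0))) := by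
  rw [fmap_fmap_fmap_zero, fmap_fmap_fmap_zero, dist_smul₀, dist_toLp_intCast, Real.norm_eq_abs,
    abs_inv, abs_of_pos (by norm_num), lt_inv_mul_iff₀ (by norm_num), mul_one,
    Real.lt_sqrt (by norm_num)]
  exact_mod_cast cellZ_separated i a b a' b' hi

theorem disjoint_fmap_zero_image {A : Set E3} (hA : IsAttractor (1 / 2) Prot A) {i : Fin 4}
    (hi : i ≠ 0) : Disjoint (φ 0 '' A) (φ i '' A) := by
  have hhalf : |(1 / 2 : ℝ)| = 1 / 2 := abs_of_pos (by norm_num)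
  have hcell : ∀ {x}, x ∈ A → ∃ a b, dist x (φ a (φ b 0)) ≤ 1 := fun hx => by
    have h := hA.exists_dist_fmap_fmap_zero_le norm_toEuclideanLin_Prot (by norm_num [hhalf]) hx
    rwa [hhalf, show (1 / 2 : ℝ) ^ 2 * (2 / (1 - 1 / 2)) = 1 by norm_num] at h
  have hdist (j : Fin 4) (u v : E3) : dist (φ j u) (φ j v) = dist u v / 2 := by
    rw [dist_fmap_fmap norm_toEuclideanLin_Prot, hhalf, one_div_mul_eq_div]
  rw [disjoint_iff_forall_ne]
  rintro _ ⟨x, hx, rfl⟩ _ ⟨y, hy, rfl⟩ hxy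
  obtain ⟨a, b, hab⟩ := hcell hx
  obtain ⟨a', b', hab'⟩ := hcell hy
  have htri := dist_triangle (φ 0 (φ a (φ b 0))) (φ 0 x) (φ i (φ a' (φ b' 0)))
  rw [hdist, hxy, hdist, dist_comm _ x] at htri
  linarith [one_lt_dist_fmap_fmap_fmap_zero hi a b a' b']

def periodicPt : E3 := !₂[-22 / 9, -14 / 9, -10 / 9]

theorem fmapWord_periodicPt :
    fmapWord (1 / 2) Prot [2, 1, 1, 3, 3, 2] periodicPt = periodicPt := by
  simp only [fmapWord, Function.comp_apply, id, fmap_half_Prot_apply]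
  ext k; fin_cases k <;> simp [vtx, periodicPt] <;> norm_num

theorem fmap_one_periodicPt : φ 1 periodicPt = φ 2 (φ 3 (φ 3 (φ 2 periodicPt))) := by
  simp only [fmap_half_Prot_apply]
  ext k; fin_cases k <;> simp [vtx, periodicPt] <;> norm_num

theorem fmap_one_fmap_two_periodicPt :
    φ 1 (φ 2 periodicPt) = φ 3 (φ 1 (φ 3 (φ 3 (φ 2 periodicPt)))) := by
  simp only [fmap_half_Prot_apply]
  ext k; fin_cases k <;> simp [vtx, periodicPt] <;> norm_num

theorem fmap_two_fmap_three_fmap_two_periodicPt :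
    φ 2 (φ 3 (φ 2 periodicPt)) = φ 3 (φ 1 (φ 1 (φ 3 (φ 3 (φ 2 periodicPt))))) := by
  simp only [fmap_half_Prot_apply]
  ext k; fin_cases k <;> simp [vtx, periodicPt] <;> norm_num

theorem image_inter_image_nonempty {A : Set E3} (hA : IsAttractor (1 / 2) Prot A) {i j : Fin 4}
    (hi : i ≠ 0) (hj : j ≠ 0) : (φ i '' A ∩ φ j '' A).Nonempty := by
  have hp : periodicPt ∈ A :=
    hA.mem_of_fmapWord_eq norm_toEuclideanLin_Prot (by norm_num [abs_of_pos])
      (List.cons_ne_nil _ _) fmapWord_periodicPt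
  have common : ∀ {i j : Fin 4} {x y : E3}, x ∈ A → y ∈ A → φ i x = φ j y →
      (φ i '' A ∩ φ j '' A).Nonempty :=
    fun hx hy h => ⟨_, mem_image_of_mem _ hx, h ▸ mem_image_of_mem _ hy⟩
  have h12 : (φ 1 '' A ∩ φ 2 '' A).Nonempty :=
    common hp (by apply_rules [hA.fmap_mem]) fmap_one_periodicPt
  have h13 : (φ 1 '' A ∩ φ 3 '' A).Nonempty :=
    common (by apply_rules [hA.fmap_mem]) (by apply_rules [hA.fmap_mem])
      fmap_one_fmap_two_periodicPt
  have h23 : (φ 2 '' A ∩ φ 3 '' A).Nonempty :=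
    common (by apply_rules [hA.fmap_mem]) (by apply_rules [hA.fmap_mem])
      fmap_two_fmap_three_fmap_two_periodicPt
  fin_cases i <;> fin_cases j <;> first
    | exact absurd rfl hi
    | exact absurd rfl hj
    | exact (inter_self (φ _ '' A)).symm ▸ hA.1.image _
    | assumption
    | rwa [inter_comm]

theorem pieces_intersections_example (A : Set E3) (hA : IsAttractor (1 / 2) Prot A) :
    (∀ i : Fin 4, i ≠ 0 → fmap (1 / 2) Prot 0 '' A ∩ fmap (1 / 2) Prot i '' A = ∅) ∧
    (∀ i j : Fin 4, i ≠ 0 → j ≠ 0 →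
      (fmap (1 / 2) Prot i '' A ∩ fmap (1 / 2) Prot j '' A).Nonempty) ∧
    ¬ IsConnected A :=
  ⟨fun _ hi => disjoint_iff_inter_eq_empty.1 (disjoint_fmap_zero_image hA hi),
    fun _ _ hi hj => image_inter_image_nonempty hA hi hj,
    fun hconn => hA.not_isPreconnected 0 (fun _ hi => disjoint_fmap_zero_image hA hi) hconn.2⟩
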